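/- Let Φ be a root system with simple system Δ and fix α ∈ Δ. Set m_α = max_{λ∈Φ} m_α(λ), Φ_α = {λ ∈ Φ : m_α(λ) = m_α}, and χ_α = Σ_{μ∈Φ_α} μ. If λ ∈ Φ satisfies ⟨χ_α, λ⟩ > 0, then for every μ ∈ Φ_α, μ + λ is not a root. -/

import Mathlib

open scoped RealInnerProductSpace BigOperators

/-- The reflection in the (nonzero) vector `l` of a real inner product space:
`ω_l (x) = x - (2⟨x,l⟩/⟨l,l⟩) l`. -/
noncomputable def rsRefl {E : Type*} [NormedAddCommGroup E] [InnerProductSpace ℝ E]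
    (l x : E) : E :=
  x - (2 * ⟪x, l⟫ / ⟪l, l⟫) • l

variable {E : Type*} [NormedAddCommGroup E] [InnerProductSpace ℝ E]

/-!
If `μ ∈ Φ_α` and `μ + λ` is a root, maximality of `m_α` gives `m_α(λ) ≤ 0`. For `ν ∈ Φ_α` the
reflection `s_λ ν = ν - c λ`, `c = 2⟨ν, λ⟩ / ⟨λ, λ⟩`, is a root with `α`-coefficient
`m_α - c m_α(λ) ≤ m_α`. If `m_α(λ) < 0` this forces `⟨ν, λ⟩ ≤ 0` for every `ν ∈ Φ_α`; if
`m_α(λ) = 0` then `s_λ` permutes `Φ_α`, hence fixes `χ_α`, so `⟨χ_α, λ⟩ = 0`. Either way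
`⟨χ_α, λ⟩ ≤ 0`.
-/

open Finset

lemma rsRefl_rsRefl (l x : E) : rsRefl l (rsRefl l x) = x := by
  rcases eq_or_ne l 0 with rfl | hl
  · simp [rsRefl]
  have hll : ⟪l, l⟫ ≠ 0 := inner_self_ne_zero.mpr hl
  simp only [rsRefl, inner_sub_left, real_inner_smul_left, sub_sub, ← add_smul]
  rw [sub_eq_self, smul_eq_zero]
  left
  field_simp
  ring

lemma rsRefl_sum {ι : Type*} (l : E) (s : Finset ι) (f : ι → E) :
    rsRefl l (∑ k ∈ s, f k) = ∑ k ∈ s, rsRefl l (f k) := by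
  simp only [rsRefl, sum_inner, mul_sum, sum_div, sum_smul, sum_sub_distrib]

lemma inner_eq_zero_of_rsRefl_eq_self {l x : E} (h : rsRefl l x = x) : ⟪x, l⟫ = 0 := by
  rcases eq_or_ne l 0 with rfl | hl
  · simp
  have hll : ⟪l, l⟫ ≠ 0 := inner_self_ne_zero.mpr hl
  rw [rsRefl, sub_eq_self, smul_eq_zero, or_iff_left hl] at h
  field_simp at h
  linarith

lemma inner_sum_eq_zero_of_mapsTo_rsRefl {l : E} {S : Finset E}
    (h : ∀ x ∈ S, rsRefl l x ∈ S) : ⟪∑ x ∈ S, x, l⟫ = 0 := by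
  refine inner_eq_zero_of_rsRefl_eq_self ?_
  rw [rsRefl_sum]
  exact sum_nbij' (rsRefl l) (rsRefl l) h h (fun x _ => rsRefl_rsRefl l x)
    (fun x _ => rsRefl_rsRefl l x) (fun _ _ => rfl)

section Coefficients

variable {ι : Type*} [Fintype ι] {Φ : Finset E} {b : ι → E} {m : E → ι → ℤ} {l : E} {i : ι} {M : ℤ}

lemma coeff_eq_of_eq_sum (hb : LinearIndependent ℝ b)
    (hexp : ∀ l ∈ Φ, l = ∑ j, (m l j : ℝ) • b j) {x : E} (hx : x ∈ Φ) {c : ι → ℝ}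
    (h : x = ∑ j, c j • b j) (j : ι) : (m x j : ℝ) = c j :=
  Fintype.linearIndependent_iffₛ.mp hb _ _ ((hexp x hx).symm.trans h) j

lemma coeff_add (hb : LinearIndependent ℝ b) (hexp : ∀ l ∈ Φ, l = ∑ j, (m l j : ℝ) • b j)
    {x y : E} (hx : x ∈ Φ) (hy : y ∈ Φ) (hxy : x + y ∈ Φ) (j : ι) :
    m (x + y) j = m x j + m y j := by
  have := coeff_eq_of_eq_sum hb hexp hxy (c := fun j => (m x j : ℝ) + m y j)
    (by simp only [add_smul, sum_add_distrib, ← hexp x hx, ← hexp y hy]) j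
  exact_mod_cast this

lemma coeff_rsRefl (hb : LinearIndependent ℝ b) (hexp : ∀ l ∈ Φ, l = ∑ j, (m l j : ℝ) • b j)
    {l x : E} (hl : l ∈ Φ) (hx : x ∈ Φ) (hlx : rsRefl l x ∈ Φ) (j : ι) :
    (m (rsRefl l x) j : ℝ) = m x j - 2 * ⟪x, l⟫ / ⟪l, l⟫ * m l j := by
  refine coeff_eq_of_eq_sum hb hexp hlx (c := fun j => m x j - 2 * ⟪x, l⟫ / ⟪l, l⟫ * m l j) ?_ j
  simp only [sub_smul, mul_smul, sum_sub_distrib, ← smul_sum, ← hexp x hx, ← hexp l hl, rsRefl]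

lemma inner_nonpos_of_coeff_eq_max_of_coeff_neg (hb : LinearIndependent ℝ b)
    (hexp : ∀ l ∈ Φ, l = ∑ j, (m l j : ℝ) • b j) (hl : l ∈ Φ) (hrefl : ∀ x ∈ Φ, rsRefl l x ∈ Φ)
    (hM : ∀ x ∈ Φ, m x i ≤ M) (hli : m l i < 0) {x : E} (hx : x ∈ Φ)
    (hxM : m x i = M) : ⟪x, l⟫ ≤ 0 := by
  rcases eq_or_ne l 0 with rfl | hl0
  · simp
  have hle : (m (rsRefl l x) i : ℝ) ≤ M := by exact_mod_cast hM _ (hrefl x hx)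
  rw [coeff_rsRefl hb hexp hl hx (hrefl x hx), hxM] at hle
  have hli' : (m l i : ℝ) < 0 := by exact_mod_cast hli
  have hc : 2 * ⟪x, l⟫ / ⟪l, l⟫ ≤ 0 := by nlinarith
  have := (div_le_iff₀ (real_inner_self_pos.mpr hl0)).mp hc
  linarith

lemma rsRefl_mem_filter_of_coeff_eq_zero (hb : LinearIndependent ℝ b)
    (hexp : ∀ l ∈ Φ, l = ∑ j, (m l j : ℝ) • b j) (hl : l ∈ Φ) (hrefl : ∀ x ∈ Φ, rsRefl l x ∈ Φ)
    (hli : m l i = 0) {x : E}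
    (hx : x ∈ Φ.filter (m · i = M)) : rsRefl l x ∈ Φ.filter (m · i = M) := by
  obtain ⟨hxΦ, hxM⟩ := mem_filter.mp hx
  refine mem_filter.mpr ⟨hrefl x hxΦ, ?_⟩
  have := coeff_rsRefl hb hexp hl hxΦ (hrefl x hxΦ) i
  rw [hli, hxM] at this
  simpa using this

lemma inner_sum_filter_coeff_eq_max_nonpos (hb : LinearIndependent ℝ b)
    (hexp : ∀ l ∈ Φ, l = ∑ j, (m l j : ℝ) • b j) (hl : l ∈ Φ) (hrefl : ∀ x ∈ Φ, rsRefl l x ∈ Φ)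
    (hM : ∀ x ∈ Φ, m x i ≤ M) (hli : m l i ≤ 0) :
    ⟪∑ x ∈ Φ.filter (m · i = M), x, l⟫ ≤ 0 := by
  rcases hli.lt_or_eq with hneg | hzero
  · rw [sum_inner]
    refine sum_nonpos fun x hx => ?_
    obtain ⟨hxΦ, hxM⟩ := mem_filter.mp hx
    exact inner_nonpos_of_coeff_eq_max_of_coeff_neg hb hexp hl hrefl hM hneg hxΦ hxM
  · exact (inner_sum_eq_zero_of_mapsTo_rsRefl fun x hx =>
      rsRefl_mem_filter_of_coeff_eq_zero hb hexp hl hrefl hzero hx).le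

end Coefficients

theorem stmt7_general {r : ℕ} (Φ : Finset E)
    (hrefl : ∀ l ∈ Φ, ∀ μ ∈ Φ, rsRefl l μ ∈ Φ)
    (α : Fin r → E) (hα : ∀ i, α i ∈ Φ) (hli : LinearIndependent ℝ α)
    (m : E → Fin r → ℤ)
    (hexp : ∀ l ∈ Φ, l = ∑ j : Fin r, (m l j : ℝ) • α j)
    (i : Fin r) (lam : E) (hlam : lam ∈ Φ)
    (hpos : 0 < ⟪∑ l ∈ Φ.filter (fun l => m l i = Φ.sup' ⟨α i, hα i⟩ (fun l => m l i)), l, lam⟫) :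
    ∀ μ ∈ Φ.filter (fun l => m l i = Φ.sup' ⟨α i, hα i⟩ (fun l => m l i)), μ + lam ∉ Φ := by
  intro μ hμ hμlam
  obtain ⟨hμΦ, hμM⟩ := mem_filter.mp hμ
  have hM : ∀ l ∈ Φ, m l i ≤ Φ.sup' ⟨α i, hα i⟩ (fun l => m l i) :=
    fun l hl => le_sup' (fun l => m l i) hl
  have hlam_coeff : m lam i ≤ 0 := by
    have := hM _ hμlam
    rw [coeff_add hli hexp hμΦ hlam hμlam, hμM] at this
    omega
  exact (inner_sum_filter_coeff_eq_max_nonpos hli hexp hlam (hrefl lam hlam) hM hlam_coeff).not_gt hpos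

/-- With `Φ`, `Δ`, `α = αᵢ`, `m_α`, `Φ_α` and `χ_α = Σ_{μ ∈ Φ_α} μ` as in the
non-reduced-case setup: if a root `λ` satisfies `⟨χ_α, λ⟩ > 0`, then `μ + λ` is not a root
for any `μ ∈ Φ_α`. -/
theorem stmt7 {r : ℕ} (Φ : Finset E)
    (h0 : (0 : E) ∉ Φ)
    (hrefl : ∀ l ∈ Φ, ∀ μ ∈ Φ, rsRefl l μ ∈ Φ)
    (hint : ∀ l ∈ Φ, ∀ μ ∈ Φ, ∃ z : ℤ, 2 * ⟪μ, l⟫ / ⟪l, l⟫ = (z : ℝ))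
    (α : Fin r → E) (hα : ∀ i, α i ∈ Φ) (hli : LinearIndependent ℝ α)
    (m : E → Fin r → ℤ)
    (hexp : ∀ l ∈ Φ, l = ∑ j : Fin r, (m l j : ℝ) • α j)
    (hsign : ∀ l ∈ Φ, (∀ j, 0 ≤ m l j) ∨ (∀ j, m l j ≤ 0))
    (i : Fin r) (lam : E) (hlam : lam ∈ Φ)
    (hpos : 0 < ⟪∑ l ∈ Φ.filter (fun l => m l i = Φ.sup' ⟨α i, hα i⟩ (fun l => m l i)), l, lam⟫) :
    ∀ μ ∈ Φ.filter (fun l => m l i = Φ.sup' ⟨α i, hα i⟩ (fun l => m l i)), μ + lam ∉ Φ :=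
  stmt7_general Φ hrefl α hα hli m hexp i lam hlam hpos
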